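/- The number of permutations of {1,...,n} whose descent set is contained in {b_1, b_1+b_2, ..., b_1+...+b_a = n} equals the multinomial coefficient n!/(b_1!·...·b_a!). -/

import Mathlib

namespace DescentAux

/-- Partial sums. -/
def S (b : ℕ → ℕ) (j : ℕ) : ℕ := ∑ i ∈ Finset.range j, b i

lemma S_mono (b : ℕ → ℕ) : Monotone (S b) := fun _ _ h =>
  Finset.sum_le_sum_of_subset (Finset.range_subset_range.2 h)

/-- Block index of position `i`. -/
def blkf (a : ℕ) (b : ℕ → ℕ) (i : ℕ) : ℕ :=
  ((Finset.range a).filter fun j => S b (j + 1) ≤ i).card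

lemma blkf_mono (a : ℕ) (b : ℕ → ℕ) : Monotone (blkf a b) := fun i k h =>
  Finset.card_le_card (by
    intro j hj
    simp only [Finset.mem_filter] at hj ⊢
    exact ⟨hj.1, hj.2.trans h⟩)

lemma blkf_eq (a : ℕ) (b : ℕ → ℕ) {i j : ℕ} (hj : j < a) (h1 : S b j ≤ i)
    (h2 : i < S b (j + 1)) : blkf a b i = j := by
  have hset : (Finset.range a).filter (fun j' => S b (j' + 1) ≤ i) = Finset.range j := by
    ext j'
    simp only [Finset.mem_filter, Finset.mem_range]
    constructor
    · rintro ⟨_, hle⟩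
      by_contra hc
      push_neg at hc
      have := S_mono b (show j + 1 ≤ j' + 1 by omega)
      omega
    · intro hlt
      exact ⟨hlt.trans hj, le_trans (S_mono b (by omega)) h1⟩
  rw [blkf, hset, Finset.card_range]

lemma exists_blk (a : ℕ) (b : ℕ → ℕ) {n i : ℕ} (ha : 1 ≤ a) (hb : S b a = n) (hi : i < n) :
    ∃ j, j < a ∧ S b j ≤ i ∧ i < S b (j + 1) := by
  classical
  set j0 := Nat.findGreatest (fun j => S b j ≤ i) a with hj0
  have h0 : S b 0 ≤ i := by simp [S]
  have hspec : S b j0 ≤ i := Nat.findGreatest_spec (P := fun j => S b j ≤ i) (Nat.zero_le a) h0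
  have hle : j0 ≤ a := Nat.findGreatest_le a
  have hne : j0 ≠ a := by
    intro h
    rw [h, hb] at hspec
    omega
  have hlt : j0 < a := lt_of_le_of_ne hle hne
  have hgt : ¬ S b (j0 + 1) ≤ i :=
    Nat.findGreatest_is_greatest (P := fun j => S b j ≤ i) (n := a) (k := j0 + 1) (by omega) (by omega)
  exact ⟨j0, hlt, hspec, by omega⟩

lemma blkf_spec (a : ℕ) (b : ℕ → ℕ) {n i : ℕ} (ha : 1 ≤ a) (hb : S b a = n) (hi : i < n) :
    blkf a b i < a ∧ S b (blkf a b i) ≤ i ∧ i < S b (blkf a b i + 1) := by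
  obtain ⟨j, hj, h1, h2⟩ := exists_blk a b ha hb hi
  rw [blkf_eq a b hj h1 h2]
  exact ⟨hj, h1, h2⟩

end DescentAux

namespace DescentAux

variable {n m : ℕ}

/-- The lex graph of a permutation relative to a block function. -/
def F (blk : Fin n → Fin m) (σ : Equiv.Perm (Fin n)) : Fin n → Lex (Fin m × Fin n) :=
  fun i => toLex (blk i, σ i)

/-- The block-sorting permutation. -/
def T (blk : Fin n → Fin m) (σ : Equiv.Perm (Fin n)) : Equiv.Perm (Fin n) :=
  Tuple.sort (F blk σ)

theorem card_mul_card (n m : ℕ) (blk : Fin n → Fin m) (hmono : Monotone blk) :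
    Nat.card {π : Equiv.Perm (Fin n) //
        ∀ i i' : Fin n, i < i' → blk i = blk i' → π i < π i'} *
      Nat.card {g : Equiv.Perm (Fin n) // blk ∘ ⇑g = blk} = Nat.factorial n := by
  classical
  have hblkT : ∀ σ : Equiv.Perm (Fin n), blk ∘ ⇑(T blk σ) = blk := by
    intro σ
    have h1 : Monotone (F blk σ ∘ ⇑(T blk σ)) := Tuple.monotone_sort (F blk σ)
    have h2 : Monotone (blk ∘ ⇑(T blk σ)) := by
      intro x y hxy
      have h3 := h1 hxy
      unfold F at h3
      simp only [Function.comp_apply] at h3 ⊢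
      rcases Prod.Lex.toLex_le_toLex.1 h3 with h | h
      · exact h.le
      · exact le_of_eq h.1
    have h4 : Monotone (blk ∘ ⇑(Equiv.refl (Fin n))) := by simpa using hmono
    have h5 := Tuple.unique_monotone (f := blk) h2 h4
    simpa using h5
  have hDmem : ∀ σ : Equiv.Perm (Fin n), ∀ i i' : Fin n, i < i' → blk i = blk i' →
      (σ * T blk σ) i < (σ * T blk σ) i' := by
    intro σ i i' hii hbb
    have h1 : Monotone (F blk σ ∘ ⇑(T blk σ)) := Tuple.monotone_sort (F blk σ)
    have h2 := h1 hii.le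
    unfold F at h2
    simp only [Function.comp_apply] at h2
    have hb1 : blk (T blk σ i) = blk (T blk σ i') := by
      have e1 := congrFun (hblkT σ) i
      have e2 := congrFun (hblkT σ) i'
      simp only [Function.comp_apply] at e1 e2
      rw [e1, e2]
      exact hbb
    show σ (T blk σ i) < σ (T blk σ i')
    rcases Prod.Lex.toLex_le_toLex.1 h2 with h | h
    · exact absurd hb1 (ne_of_lt h)
    · have hne : T blk σ i ≠ T blk σ i' := fun hc => (ne_of_lt hii) ((T blk σ).injective hc)
      exact lt_of_le_of_ne h.2 (fun hc => hne (σ.injective hc))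
  have hsort : ∀ d τ : Equiv.Perm (Fin n),
      (∀ i i' : Fin n, i < i' → blk i = blk i' → d i < d i') → (blk ∘ ⇑τ = blk) →
      T blk (d * τ) = τ⁻¹ := by
    intro d τ hd hτ
    have hτ' : ∀ k : Fin n, blk (τ⁻¹ k) = blk k := by
      intro k
      have h := congrFun hτ (τ⁻¹ k)
      simp only [Function.comp_apply, Equiv.Perm.coe_inv, Equiv.apply_symm_apply] at h
      exact h.symm
    have e : ∀ k : Fin n, F blk (d * τ) (τ⁻¹ k) = toLex (blk k, d k) := by
      intro k
      show toLex (blk (τ⁻¹ k), (d * τ) (τ⁻¹ k)) = toLex (blk k, d k)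
      rw [hτ' k]
      have : (d * τ) (τ⁻¹ k) = d k := by
        simp [Equiv.Perm.mul_apply]
      rw [this]
    symm
    show τ⁻¹ = Tuple.sort (F blk (d * τ))
    rw [Tuple.eq_sort_iff]
    constructor
    · intro i j hij
      show F blk (d * τ) (τ⁻¹ i) ≤ F blk (d * τ) (τ⁻¹ j)
      rw [e i, e j]
      rcases (hmono hij).lt_or_eq with h | h
      · exact (Prod.Lex.toLex_le_toLex (x := (blk i, d i)) (y := (blk j, d j))).2 (Or.inl h)
      · refine (Prod.Lex.toLex_le_toLex (x := (blk i, d i)) (y := (blk j, d j))).2 (Or.inr ⟨h, ?_⟩)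
        rcases hij.lt_or_eq with h2 | h2
        · exact (hd i j h2 h).le
        · exact le_of_eq (congrArg d h2)
    · intro i j hij heq
      rw [e i, e j] at heq
      have hdd : d i = d j := congrArg (fun p => (ofLex p).2) heq
      exact absurd (d.injective hdd) (ne_of_lt hij)
  let E : ({π : Equiv.Perm (Fin n) // ∀ i i' : Fin n, i < i' → blk i = blk i' → π i < π i'} ×
      {g : Equiv.Perm (Fin n) // blk ∘ ⇑g = blk}) ≃ Equiv.Perm (Fin n) :=
    { toFun := fun p => p.1.1 * p.2.1
      invFun := fun σ => (⟨σ * T blk σ, hDmem σ⟩, ⟨(T blk σ)⁻¹, by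
        funext i
        show blk ((T blk σ)⁻¹ i) = blk i
        have h := congrFun (hblkT σ) ((T blk σ)⁻¹ i)
        simp only [Function.comp_apply, Equiv.Perm.coe_inv, Equiv.apply_symm_apply] at h
        exact h.symm⟩)
      left_inv := by
        rintro ⟨⟨d, hd⟩, ⟨τ, hτ⟩⟩
        have h := hsort d τ hd hτ
        refine Prod.ext ?_ ?_
        · apply Subtype.ext
          show d * τ * T blk (d * τ) = d
          rw [h]
          exact mul_inv_cancel_right d τ
        · apply Subtype.ext
          show (T blk (d * τ))⁻¹ = τ
          rw [h, inv_inv]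
      right_inv := fun σ => mul_inv_cancel_right σ (T blk σ) }
  have hc := Nat.card_congr E
  rw [Nat.card_prod] at hc
  rw [hc, Nat.card_eq_fintype_card, Fintype.card_perm, Fintype.card_fin]

end DescentAux



/-- The value of `π` at the (0-indexed) position `i`, extended by `0` outside the range. -/
def permVal (n : ℕ) (π : Equiv.Perm (Fin n)) (i : ℕ) : ℕ :=
  if h : i < n then (π ⟨i, h⟩ : ℕ) else 0

/-- The descent set of `π ∈ S_n` (positions `1,…,n-1` written 1-indexed, with the
convention that `n` is always a descent): `i` with `1 ≤ i ≤ n-1` is a descent iff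
`π(i) > π(i+1)`. -/
def descentSet (n : ℕ) (π : Equiv.Perm (Fin n)) : Finset ℕ :=
  insert n ((Finset.Ico 1 n).filter fun i => permVal n π i < permVal n π (i - 1))

/-- The set of partial sums `{b₁, b₁+b₂, …, b₁+⋯+b_a}`. -/
def partialSums (a : ℕ) (b : ℕ → ℕ) : Finset ℕ :=
  (Finset.range a).image fun j => ∑ i ∈ Finset.range (j + 1), b i

/-- The number of permutations of `{1,…,n}` with descent set contained in
`{b₁, b₁+b₂, …, b₁+⋯+b_a = n}` is the multinomial coefficient `n!/(b₁!⋯b_a!)`. -/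
theorem stmt0 (n a : ℕ) (ha : 1 ≤ a) (b : ℕ → ℕ)
    (hb : ∑ i ∈ Finset.range a, b i = n) :
    (Nat.card {π : Equiv.Perm (Fin n) // descentSet n π ⊆ partialSums a b} : ℚ) =
      (Nat.factorial n : ℚ) / ∏ i ∈ Finset.range a, (Nat.factorial (b i) : ℚ) := by
  classical
  have hb' : DescentAux.S b a = n := hb
  let blk : Fin n → Fin a := fun i =>
    ⟨DescentAux.blkf a b i, (DescentAux.blkf_spec a b ha hb' i.isLt).1⟩
  have hmono : Monotone blk := fun i j h =>
    Fin.mk_le_mk.mpr (DescentAux.blkf_mono a b h)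
  have permVal_eq : ∀ (π : Equiv.Perm (Fin n)) (x : ℕ) (hx : x < n),
      permVal n π x = π ⟨x, hx⟩ := fun π x hx => dif_pos hx
  have hPS : ∀ x : ℕ, x ∈ partialSums a b ↔ ∃ j, j < a ∧ DescentAux.S b (j + 1) = x := by
    intro x
    simp [partialSums, DescentAux.S]
  have not_ps_imp : ∀ x : ℕ, 0 < x → x < n → x ∉ partialSums a b →
      DescentAux.blkf a b (x - 1) = DescentAux.blkf a b x := by
    intro x hx0 hxn hps
    obtain ⟨hk, h1, h2⟩ := DescentAux.blkf_spec a b ha hb' hxn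
    have hne : DescentAux.S b (DescentAux.blkf a b x) ≠ x := by
      intro hSk
      rcases Nat.eq_zero_or_pos (DescentAux.blkf a b x) with h0 | hkpos
      · rw [h0] at hSk
        simp [DescentAux.S] at hSk
        omega
      · exact hps ((hPS x).2 ⟨DescentAux.blkf a b x - 1, by omega,
          by rw [Nat.sub_add_cancel hkpos]; exact hSk⟩)
    exact DescentAux.blkf_eq a b hk (by omega) (by omega)
  have ps_imp : ∀ x : ℕ, 0 < x → x < n → x ∈ partialSums a b →
      DescentAux.blkf a b (x - 1) ≠ DescentAux.blkf a b x := by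
    intro x hx0 hxn hps heq
    obtain ⟨j, hj, hSj⟩ := (hPS x).1 hps
    obtain ⟨hk, h1, h2⟩ := DescentAux.blkf_spec a b ha hb' hxn
    obtain ⟨hk', h1', h2'⟩ := DescentAux.blkf_spec a b ha hb' (show x - 1 < n by omega)
    rw [heq] at h1'
    have hj1 : j + 1 ≤ DescentAux.blkf a b x := by
      by_contra hc
      push_neg at hc
      have := DescentAux.S_mono b (show DescentAux.blkf a b x + 1 ≤ j + 1 by omega)
      omega
    have := DescentAux.S_mono b hj1
    omega
  have key : ∀ π : Equiv.Perm (Fin n), descentSet n π ⊆ partialSums a b ↔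
      ∀ i i' : Fin n, i < i' → blk i = blk i' → π i < π i' := by
    intro π
    constructor
    · intro hsub
      have adj : ∀ (x : ℕ) (hx1 : x < n) (hx : x + 1 < n),
          blk ⟨x, hx1⟩ = blk ⟨x + 1, hx⟩ → π ⟨x, hx1⟩ < π ⟨x + 1, hx⟩ := by
        intro x hx1 hx hblk
        by_contra hc
        push_neg at hc
        have hne : π ⟨x + 1, hx⟩ ≠ π ⟨x, hx1⟩ := by
          intro h
          have h2 := π.injective h
          simp [Fin.ext_iff] at h2
        have hlt : π ⟨x + 1, hx⟩ < π ⟨x, hx1⟩ := lt_of_le_of_ne hc hne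
        have hmem : (x + 1) ∈ descentSet n π := by
          simp only [descentSet, Finset.mem_insert, Finset.mem_filter, Finset.mem_Ico]
          right
          refine ⟨⟨by omega, by omega⟩, ?_⟩
          rw [show x + 1 - 1 = x by omega, permVal_eq π (x + 1) hx, permVal_eq π x hx1]
          exact hlt
        have hps := hsub hmem
        exact ps_imp (x + 1) (by omega) (by omega) hps
          (by rw [show x + 1 - 1 = x by omega]; exact congrArg Fin.val hblk)
      have chain : ∀ (m x : ℕ) (hx1 : x < n) (hx : x + m + 1 < n),
          blk ⟨x, hx1⟩ = blk ⟨x + m + 1, hx⟩ → π ⟨x, hx1⟩ < π ⟨x + m + 1, hx⟩ := by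
        intro m
        induction m with
        | zero => intro x hx1 hx h; exact adj x hx1 hx h
        | succ k ih =>
          intro x hx1 hx h
          have hmid : x + k + 1 < n := by omega
          have h1 : blk ⟨x, hx1⟩ ≤ blk ⟨x + k + 1, hmid⟩ := hmono (Fin.mk_le_mk.mpr (by omega))
          have h2 : blk ⟨x + k + 1, hmid⟩ ≤ blk ⟨x + (k + 1) + 1, hx⟩ :=
            hmono (Fin.mk_le_mk.mpr (by omega))
          have hm1 : blk ⟨x, hx1⟩ = blk ⟨x + k + 1, hmid⟩ :=
            le_antisymm h1 (by rw [h]; exact h2)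
          have hm2 : blk ⟨x + k + 1, hmid⟩ = blk ⟨x + (k + 1) + 1, hx⟩ := hm1.symm.trans h
          exact (ih x hx1 hmid hm1).trans (adj (x + k + 1) hmid hx hm2)
      intro i i' hii hbb
      have hnat : (i : ℕ) < (i' : ℕ) := hii
      have hval : (i : ℕ) + ((i' : ℕ) - (i : ℕ) - 1) + 1 = (i' : ℕ) := by omega
      have hx : (i : ℕ) + ((i' : ℕ) - (i : ℕ) - 1) + 1 < n := by
        rw [hval]; exact i'.isLt
      have e1 : (⟨(i : ℕ), i.isLt⟩ : Fin n) = i := Fin.eta i i.isLt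
      have e2 : (⟨(i : ℕ) + ((i' : ℕ) - (i : ℕ) - 1) + 1, hx⟩ : Fin n) = i' := Fin.ext hval
      have hch := chain ((i' : ℕ) - (i : ℕ) - 1) (i : ℕ) i.isLt hx (by rw [e1, e2]; exact hbb)
      rw [e1, e2] at hch
      exact hch
    · intro hd x hx
      simp only [descentSet, Finset.mem_insert, Finset.mem_filter, Finset.mem_Ico] at hx
      rcases hx with hxeq | ⟨⟨hx1, hx2⟩, hdesc⟩
      · rw [hxeq]
        exact (hPS n).2 ⟨a - 1, by omega, by rw [Nat.sub_add_cancel ha]; exact hb'⟩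
      · by_contra hps
        have hblk := not_ps_imp x hx1 hx2 hps
        have hx1n : x - 1 < n := by omega
        have hlt : π ⟨x - 1, hx1n⟩ < π ⟨x, hx2⟩ :=
          hd ⟨x - 1, hx1n⟩ ⟨x, hx2⟩ (Fin.mk_lt_mk.mpr (by omega)) (Fin.ext hblk)
        rw [permVal_eq π x hx2, permVal_eq π (x - 1) hx1n] at hdesc
        have hlt' := Fin.lt_def.mp hlt
        omega
  have hfiber : ∀ j : Fin a, Fintype.card {i : Fin n // blk i = j} = b j := by
    intro j
    rw [Fintype.card_subtype]
    have himg : (Finset.univ.filter fun i : Fin n => blk i = j).image Fin.val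
        = Finset.Ico (DescentAux.S b (j : ℕ)) (DescentAux.S b ((j : ℕ) + 1)) := by
      ext x
      simp only [Finset.mem_image, Finset.mem_filter, Finset.mem_univ, true_and,
        Finset.mem_Ico]
      constructor
      · rintro ⟨i, hi, rfl⟩
        have hv : DescentAux.blkf a b (i : ℕ) = (j : ℕ) := congrArg Fin.val hi
        obtain ⟨hk, h1, h2⟩ := DescentAux.blkf_spec a b ha hb' i.isLt
        rw [hv] at h1 h2
        exact ⟨h1, h2⟩
      · rintro ⟨h1, h2⟩
        have hxn : x < n := by
          have h3 := DescentAux.S_mono b (show (j : ℕ) + 1 ≤ a from j.isLt)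
          omega
        exact ⟨⟨x, hxn⟩, Fin.ext (DescentAux.blkf_eq a b j.isLt h1 h2), rfl⟩
    have hcard := congrArg Finset.card himg
    rw [Finset.card_image_of_injective _ Fin.val_injective] at hcard
    rw [hcard, Nat.card_Ico]
    have hsucc : DescentAux.S b ((j : ℕ) + 1) = DescentAux.S b (j : ℕ) + b (j : ℕ) :=
      Finset.sum_range_succ b (j : ℕ)
    omega
  have hY := DomMulAct.stabilizer_card blk
  have hcount := DescentAux.card_mul_card n a blk hmono
  have hYval : Nat.card {g : Equiv.Perm (Fin n) // blk ∘ ⇑g = blk}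
      = ∏ i ∈ Finset.range a, Nat.factorial (b i) := by
    rw [Nat.card_eq_fintype_card, hY]
    rw [← Fin.prod_univ_eq_prod_range (fun i => Nat.factorial (b i)) a]
    exact Finset.prod_congr rfl fun j _ => by rw [hfiber j]
  rw [hYval] at hcount
  have hcs : Nat.card {π : Equiv.Perm (Fin n) // descentSet n π ⊆ partialSums a b}
      = Nat.card {π : Equiv.Perm (Fin n) //
          ∀ i i' : Fin n, i < i' → blk i = blk i' → π i < π i'} :=
    Nat.card_congr (Equiv.subtypeEquivRight key)
  rw [hcs]
  have hne : (∏ i ∈ Finset.range a, (Nat.factorial (b i) : ℚ)) ≠ 0 :=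
    Finset.prod_ne_zero_iff.mpr fun i _ => Nat.cast_ne_zero.2 (Nat.factorial_ne_zero _)
  rw [eq_div_iff hne]
  exact_mod_cast hcount
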